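/- Let f ∈ ℂ[x1,…,xn] be an irreducible homogeneous polynomial of degree d ≥ 2 such that Sing(f) = {0}, i.e., the origin is the only point of V(f) at which the gradient of f vanishes. Then the ED data singular locus equals the dual variety: DS(f) = V(f)*. -/

import Mathlib

open MvPolynomial Pointwise

/-- Gradient of a multivariate polynomial at a point. -/
noncomputable def grad {n : ℕ} (f : MvPolynomial (Fin n) ℂ) (x : Fin n → ℂ) : Fin n → ℂ :=
  fun i => eval x (pderiv i f)

/-- Zariski closure: zero locus of the ideal of all polynomials vanishing on `S`. -/
def zclosure {σ : Type} (S : Set (σ → ℂ)) : Set (σ → ℂ) :=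
  {x | ∀ p : MvPolynomial σ ℂ, (∀ s ∈ S, eval s p = 0) → eval x p = 0}

/-- Zero locus `V(f)`. -/
def Vp {n : ℕ} (f : MvPolynomial (Fin n) ℂ) : Set (Fin n → ℂ) := {x | eval x f = 0}

/-- Regular locus. -/
def RegL {n : ℕ} (f : MvPolynomial (Fin n) ℂ) : Set (Fin n → ℂ) :=
  {x | eval x f = 0 ∧ grad f x ≠ 0}

/-- Singular locus. -/
def SingL {n : ℕ} (f : MvPolynomial (Fin n) ℂ) : Set (Fin n → ℂ) :=
  {x | eval x f = 0 ∧ grad f x = 0}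

/-- ED correspondence: Zariski closure of pairs (u,x), x regular, u - x ∈ ℂ·∇f(x),
encoded as functions on `Fin n ⊕ Fin n`. -/
def EDcorr {n : ℕ} (f : MvPolynomial (Fin n) ℂ) : Set ((Fin n ⊕ Fin n) → ℂ) :=
  zclosure {w | ∃ u x : Fin n → ℂ, w = Sum.elim u x ∧ x ∈ RegL f ∧ ∃ t : ℂ, u - x = t • grad f x}

/-- ED data singular locus. -/
def DS {n : ℕ} (f : MvPolynomial (Fin n) ℂ) : Set (Fin n → ℂ) :=
  {u | ∃ x, Sum.elim u x ∈ EDcorr f ∧ x ∈ SingL f}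

/-- Dual variety. -/
def dualV {n : ℕ} (f : MvPolynomial (Fin n) ℂ) : Set (Fin n → ℂ) :=
  zclosure {y | ∃ (t : ℂ) (x : Fin n → ℂ), x ∈ RegL f ∧ y = t • grad f x}

/-- Isotropic quadric. -/
def isoQ (n : ℕ) : Set (Fin n → ℂ) := {x | ∑ i, (x i) ^ 2 = 0}

/-- ED data isotropic locus. -/
def DI {n : ℕ} (f : MvPolynomial (Fin n) ℂ) : Set (Fin n → ℂ) :=
  {u | ∃ x, Sum.elim u x ∈ EDcorr f ∧ x ∈ isoQ n ∩ Vp f}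

/-- Zariski-closed sets. -/
def IsZClosed {σ : Type} (S : Set (σ → ℂ)) : Prop := zclosure S = S

/-- Irreducibility with respect to Zariski-closed sets. -/
def IsZIrreducible {σ : Type} (S : Set (σ → ℂ)) : Prop :=
  S.Nonempty ∧ ∀ C₁ C₂ : Set (σ → ℂ), IsZClosed C₁ → IsZClosed C₂ →
    S ⊆ C₁ ∪ C₂ → S ⊆ C₁ ∨ S ⊆ C₂

/-- `C` is an irreducible component of `S`. -/
def IsIrredComponentOf {σ : Type} (C S : Set (σ → ℂ)) : Prop :=
  C ⊆ S ∧ IsZClosed C ∧ IsZIrreducible C ∧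
    ∀ C' : Set (σ → ℂ), IsZClosed C' → IsZIrreducible C' → C ⊆ C' → C' ⊆ S → C' = C

/-!
A regular point `x` of the cone `V(f)` moves along the line `s ↦ s • x`, and by homogeneity
`∇f(s • x) = s ^ (d - 1) • ∇f(x)`; so the pairs `(s • x + t • ∇f(x), s • x)`, `s ≠ 0`, lie in the
ED correspondence, and letting `s → 0` gives `(t • ∇f(x), 0) ∈ E_f`. Closing up, `(y, 0) ∈ E_f`
for every `y` in the dual variety. Conversely `(u, x) ↦ u - x` maps `E_f` into `V(f)*`, and when the
origin is the only singular point this says `DS(f) ⊆ V(f)*`.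
-/

open Set

theorem MvPolynomial.IsHomogeneous.eval_smul {σ R : Type*} [CommSemiring R]
    {φ : MvPolynomial σ R} {m : ℕ} (hφ : φ.IsHomogeneous m) (s : R) (x : σ → R) :
    eval (s • x) φ = s ^ m * eval x φ := by
  rw [eval_eq, eval_eq, Finset.mul_sum]
  refine Finset.sum_congr rfl fun e he => ?_
  have hdeg : ∑ i ∈ e.support, e i = m := by
    rw [← Finsupp.degree_apply, Finsupp.degree_eq_weight_one]
    exact hφ (mem_support_iff.mp he)
  simp only [Pi.smul_apply, smul_eq_mul, mul_pow, Finset.prod_mul_distrib,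
    Finset.prod_pow_eq_pow_sum, hdeg]
  ring

section ZariskiClosure

variable {σ τ : Type}

lemma subset_zclosure (S : Set (σ → ℂ)) : S ⊆ zclosure S :=
  fun _ hx _ hp => hp _ hx

lemma mapsTo_zclosure {F : (σ → ℂ) → τ → ℂ} (g : τ → MvPolynomial σ ℂ)
    (hF : ∀ x j, F x j = eval x (g j)) {S : Set (σ → ℂ)} {T : Set (τ → ℂ)}
    (h : MapsTo F S (zclosure T)) : MapsTo F (zclosure S) (zclosure T) := by
  have hpull : ∀ x p, eval (F x) p = eval x (bind₁ g p) := fun x p => by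
    rw [← aeval_eq_eval, ← aeval_eq_eval, aeval_bind₁]
    congr
    funext j
    exact hF x j
  intro x hx p hp
  rw [hpull]
  exact hx _ fun y hy => hpull y p ▸ h hy p hp

lemma mem_zclosure_of_add_smul_mem {S : Set (σ → ℂ)} (a b : σ → ℂ)
    (h : ∀ s : ℂ, s ≠ 0 → a + s • b ∈ S) : a ∈ zclosure S := by
  intro p hp
  set P : Polynomial ℂ :=
    aeval (fun j => Polynomial.C (a j) + Polynomial.C (b j) * Polynomial.X) p
  have hP : ∀ s, P.eval s = eval (a + s • b) p := fun s => by
    rw [← Polynomial.coe_aeval_eq_eval, comp_aeval_apply, aeval_eq_eval]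
    congr
    funext j
    simp [mul_comm s]
  have hP0 : P = 0 :=
    Polynomial.eq_zero_of_infinite_isRoot _ <| (finite_singleton 0).infinite_compl.mono
      fun s hs => (hP s).trans (hp _ (h s hs))
  simpa [hP] using congrArg (Polynomial.eval 0) hP0

end ZariskiClosure

section Cone

variable {n d : ℕ} {f : MvPolynomial (Fin n) ℂ}

lemma grad_smul_of_isHomogeneous (hf : f.IsHomogeneous d) (s : ℂ) (x : Fin n → ℂ) :
    grad f (s • x) = s ^ (d - 1) • grad f x :=
  funext fun _ => hf.pderiv.eval_smul s x

lemma smul_mem_regL (hf : f.IsHomogeneous d) {s : ℂ} (hs : s ≠ 0) {x : Fin n → ℂ}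
    (hx : x ∈ RegL f) : s • x ∈ RegL f :=
  ⟨by rw [hf.eval_smul, hx.1, mul_zero], by
    rw [grad_smul_of_isHomogeneous hf]
    exact smul_ne_zero (pow_ne_zero _ hs) hx.2⟩

lemma mapsTo_sub_EDcorr_dualV :
    MapsTo (fun w => w ∘ .inl - w ∘ .inr) (EDcorr f) (dualV f) :=
  mapsTo_zclosure (fun i => X (.inl i) - X (.inr i)) (by simp) <| by
    rintro _ ⟨u, x, rfl, hx, t, ht⟩
    exact subset_zclosure _ ⟨t, x, hx, ht⟩

lemma elim_smul_grad_zero_mem_EDcorr (hf : f.IsHomogeneous d) {x : Fin n → ℂ}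
    (hx : x ∈ RegL f) (t : ℂ) : Sum.elim (t • grad f x) 0 ∈ EDcorr f := by
  refine mem_zclosure_of_add_smul_mem _ (Sum.elim x x) fun s hs =>
    ⟨s • x + t • grad f x, s • x, ?_, smul_mem_regL hf hs hx, t / s ^ (d - 1), ?_⟩
  · ext (i | i) <;> simp [add_comm]
  · rw [grad_smul_of_isHomogeneous hf, smul_smul, div_mul_cancel₀ _ (pow_ne_zero _ hs),
      add_sub_cancel_left]

lemma mapsTo_elim_zero_dualV_EDcorr (hf : f.IsHomogeneous d) :
    MapsTo (fun y => Sum.elim y (0 : Fin n → ℂ)) (dualV f) (EDcorr f) :=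
  mapsTo_zclosure (Sum.elim X 0) (by rintro y (i | i) <;> simp) <| by
    rintro _ ⟨t, x, hx, rfl⟩
    exact elim_smul_grad_zero_mem_EDcorr hf hx t

end Cone

theorem DS_eq_dual_of_sing_origin_general {n d : ℕ} (f : MvPolynomial (Fin n) ℂ)
    (hf : f.IsHomogeneous d)
    (hsing : SingL f = {0}) :
    DS f = dualV f := by
  ext u
  constructor
  · rintro ⟨x, hE, hx⟩
    rw [hsing, mem_singleton_iff] at hx
    subst hx
    simpa only [Sum.elim_comp_inl, Sum.elim_comp_inr, sub_zero] using mapsTo_sub_EDcorr_dualV hE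
  · exact fun hu => ⟨0, mapsTo_elim_zero_dualV_EDcorr hf hu, hsing ▸ rfl⟩

/-- Corollary: if the only singular point of the affine cone `V(f)` is the origin,
then the ED data singular locus equals the dual variety. -/
theorem DS_eq_dual_of_sing_origin {n d : ℕ} (hd : 2 ≤ d) (f : MvPolynomial (Fin n) ℂ)
    (hf : f.IsHomogeneous d) (hirr : Irreducible f)
    (hsing : SingL f = {0}) :
    DS f = dualV f :=
  DS_eq_dual_of_sing_origin_general f hf hsing
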